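/- Let φ ∈ ℝ and let f : (0,∞) → ℝ be differentiable. Then the divergence of F_{φ,f} vanishes identically on ℝ²∖{0} if and only if either cos φ = 0 (i.e. φ ∈ {π/2, 3π/2} modulo 2π) or there exists a constant K ∈ ℝ such that f(x) = K x^{−2} for all x > 0. -/

import Mathlib

open Filter Set

noncomputable section

abbrev V2 : Type := EuclideanSpace ℝ (Fin 2)

/-- Rotation of `ℝ²` by angle `φ`. -/
def Rot (φ : ℝ) (q : V2) : V2 :=
  !₂[Real.cos φ * q 0 - Real.sin φ * q 1, Real.sin φ * q 0 + Real.cos φ * q 1]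

/-- The kernel `F_{φ,f}(q) = f(‖q‖) R_φ q`. -/
def Fpf (φ : ℝ) (f : ℝ → ℝ) (q : V2) : V2 := f ‖q‖ • Rot φ q

/-- The partial derivative `∂ⱼ Fₖ (q)`. -/
def pderiv2 (F : V2 → V2) (j k : Fin 2) (q : V2) : ℝ :=
  fderiv ℝ F q (EuclideanSpace.single j 1) k

/-- The divergence `∇·F = ∂₁F₁ + ∂₂F₂`. -/
def divF (F : V2 → V2) (q : V2) : ℝ := pderiv2 F 0 0 q + pderiv2 F 1 1 q

/-- The scalar curl `∇^⊥·F = ∂₁F₂ − ∂₂F₁`. -/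
def curlF (F : V2 → V2) (q : V2) : ℝ := pderiv2 F 0 1 q - pderiv2 F 1 0 q

end

/-!
The derivative of `q ↦ f ‖q‖ • R_φ q` at `q ≠ 0` is `f(‖q‖) R_φ + (f'(‖q‖)/‖q‖) ⟪q, ·⟫ R_φ q`.
Its trace is `cos φ (2 f(r) + r f'(r))` with `r = ‖q‖`, because `tr R_φ = 2 cos φ` and
`⟪q, R_φ q⟫ = cos φ r²`. So the field is divergence free iff `cos φ = 0` or `2 f + r f' = 0`
on `(0, ∞)`, and the latter says that `r² f(r)` is constant.
-/

theorem hasFDerivAt_norm_of_ne_zero {F : Type*} [NormedAddCommGroup F] [InnerProductSpace ℝ F]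
    {x : F} (hx : x ≠ 0) : HasFDerivAt (‖·‖) (‖x‖⁻¹ • innerSL ℝ x) x := by
  have h := (hasStrictFDerivAt_norm_sq x).hasFDerivAt.sqrt (by positivity)
  simp only [Real.sqrt_sq (norm_nonneg _)] at h
  convert h using 1
  ext v
  simp only [smul_apply, coe_innerSL_apply, smul_eq_mul, nsmul_eq_mul, Nat.cast_ofNat]
  field_simp

theorem hasFDerivAt_comp_norm_smul_clm {F G : Type*} [NormedAddCommGroup F] [InnerProductSpace ℝ F]
    [NormedAddCommGroup G] [NormedSpace ℝ G] {f : ℝ → ℝ} {A : F →L[ℝ] G} {q : F} (hq : q ≠ 0)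
    (hf : DifferentiableAt ℝ f ‖q‖) :
    HasFDerivAt (fun p ↦ f ‖p‖ • A p)
      (f ‖q‖ • A + (deriv f ‖q‖ / ‖q‖) • (innerSL ℝ q).smulRight (A q)) q := by
  refine ((hf.hasDerivAt.comp_hasFDerivAt q (hasFDerivAt_norm_of_ne_zero hq)).smul
    A.hasFDerivAt).congr_fderiv ?_
  ext v
  simp [div_eq_mul_inv, mul_smul]

noncomputable def rotCLM (φ : ℝ) : V2 →L[ℝ] V2 :=
  LinearMap.toContinuousLinearMap
    { toFun := Rot φ
      map_add' := fun p q ↦ by ext i; fin_cases i <;> simp [Rot] <;> ring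
      map_smul' := fun c p ↦ by ext i; fin_cases i <;> simp [Rot] <;> ring }

theorem rotCLM_apply (φ : ℝ) (q : V2) : rotCLM φ q = Rot φ q := rfl

theorem divF_Fpf (φ : ℝ) (f : ℝ → ℝ) {q : V2} (hq : q ≠ 0) (hf : DifferentiableAt ℝ f ‖q‖) :
    divF (Fpf φ f) q = Real.cos φ * (2 * f ‖q‖ + ‖q‖ * deriv f ‖q‖) := by
  have h := hasFDerivAt_comp_norm_smul_clm (A := rotCLM φ) hq hf
  have hnorm := EuclideanSpace.real_norm_sq_eq q
  rw [Fin.sum_univ_two] at hnorm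
  rw [divF, pderiv2, pderiv2, show Fpf φ f = fun p ↦ f ‖p‖ • rotCLM φ p from rfl, h.fderiv]
  simp only [rotCLM_apply, Rot, add_apply, smul_apply, ContinuousLinearMap.smulRight_apply,
    coe_innerSL_apply, EuclideanSpace.inner_single_right, Real.ringHom_apply, PiLp.add_apply,
    PiLp.smul_apply, PiLp.single_eq_same, PiLp.single_eq_of_ne, ne_eq, one_ne_zero,
    zero_ne_one, not_false_eq_true, Matrix.cons_val_zero, Matrix.cons_val_one,
    Matrix.cons_val_fin_one, smul_eq_mul]
  field_simp
  linear_combination (-deriv f ‖q‖ * Real.cos φ) * hnorm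

theorem hasDerivAt_sq_mul {f : ℝ → ℝ} {x : ℝ} (hf : DifferentiableAt ℝ f x) :
    HasDerivAt (fun y ↦ y ^ 2 * f y) (x * (2 * f x + x * deriv f x)) x := by
  refine ((hasDerivAt_pow 2 x).mul hf.hasDerivAt).congr_deriv ?_
  push_cast
  ring

theorem two_mul_add_mul_deriv_eq_zero_iff {f : ℝ → ℝ} (hf : ∀ x, 0 < x → DifferentiableAt ℝ f x) :
    (∀ x, 0 < x → 2 * f x + x * deriv f x = 0) ↔ ∃ K, ∀ x, 0 < x → f x = K / x ^ 2 := by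
  constructor
  · intro h
    obtain ⟨K, hK⟩ := isOpen_Ioi.exists_is_const_of_deriv_eq_zero isPreconnected_Ioi
      (fun x hx ↦ (hasDerivAt_sq_mul (hf x hx)).differentiableAt.differentiableWithinAt)
      (fun x hx ↦ by simp [(hasDerivAt_sq_mul (hf x hx)).deriv, h x hx])
    refine ⟨K, fun x hx ↦ ?_⟩
    rw [← hK x hx]
    field_simp
  · rintro ⟨K, hK⟩ x hx
    have hconst : (fun y ↦ y ^ 2 * f y) =ᶠ[nhds x] fun _ ↦ K := by
      filter_upwards [Ioi_mem_nhds hx] with y hy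
      rw [hK y hy]
      field_simp [(mem_Ioi.mp hy).ne']
    have := (hasDerivAt_sq_mul (hf x hx)).unique ((hasDerivAt_const x K).congr_of_eventuallyEq hconst)
    exact (mul_eq_zero.mp this).resolve_left hx.ne'

/-- The divergence of `F_{φ,f}` vanishes identically on `ℝ² ∖ {0}`
iff `cos φ = 0` or `f(x) = K x⁻²` for some constant `K`. -/
theorem divergence_free_iff_Fpf (φ : ℝ) (f : ℝ → ℝ)
    (hf : ∀ x : ℝ, 0 < x → DifferentiableAt ℝ f x) :
    (∀ q : V2, q ≠ 0 → divF (Fpf φ f) q = 0) ↔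
      (Real.cos φ = 0 ∨ ∃ K : ℝ, ∀ x : ℝ, 0 < x → f x = K / x ^ 2) := by
  have hdiv : ∀ q : V2, q ≠ 0 →
      divF (Fpf φ f) q = Real.cos φ * (2 * f ‖q‖ + ‖q‖ * deriv f ‖q‖) :=
    fun q hq ↦ divF_Fpf φ f hq (hf _ (norm_pos_iff.mpr hq))
  rw [← two_mul_add_mul_deriv_eq_zero_iff hf]
  constructor
  · refine fun H ↦ or_iff_not_imp_left.mpr fun hc x hx ↦ ?_
    obtain ⟨q, rfl⟩ := exists_norm_eq V2 hx.le
    have hq : q ≠ 0 := norm_pos_iff.mp hx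
    exact (mul_eq_zero.mp ((hdiv q hq).symm.trans (H q hq))).resolve_left hc
  · rintro (hc | h) q hq
    · rw [hdiv q hq, hc, zero_mul]
    · rw [hdiv q hq, h _ (norm_pos_iff.mpr hq), mul_zero]
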